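/- arXiv:math/0610006 — 3 statements merged into one kernel-verified Lean document; each statement's English description precedes it below -/
import Mathlib

section
/- For smooth mean-zero $\varphi$ on the torus, with $X^2_{t,s}(\varphi,\varphi,\varphi) = 2\int_s^t\int_s^\sigma \dot X_\sigma(\varphi, \dot X_{\sigma_1}(\varphi,\varphi))\,d\sigma_1\,d\sigma$, one has $2\langle \varphi, X^2_{t,s}(\varphi,\varphi,\varphi)\rangle_{L^2} + \|X_{t,s}(\varphi,\varphi)\|_{L^2}^2 = 0$. -/
/-!
Differentiating `‖X_{τ,s}(φ,φ)‖²` in `τ` gives `2⟨X_{τ,s}(φ,φ), Ẋ_τ(φ,φ)⟩`, while integrating out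
the inner time in `X²_{t,s}` gives `2∫_s^t Ẋ_σ(φ, X_{σ,s}(φ,φ)) dσ`. The antisymmetry
`⟨φ, Ẋ_σ(φ,ψ)⟩ = -½⟨ψ, Ẋ_σ(φ,φ)⟩` with `ψ = X_{σ,s}(φ,φ)` then turns `2⟨φ, X²_{t,s}⟩` into
`-∫_s^t 2⟨X_{σ,s}, Ẋ_σ⟩ dσ`. Since `φ` has finitely many Fourier modes, every sum is finite and
commutes with the time integrals and derivatives.
-/

open MeasureTheory
open scoped Real

/-- The Airy group `U(s)` in Fourier variables: `(U(s)φ)^(k) = e^{ik³s} φ̂(k)`. -/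
noncomputable def Ugrp (s : ℝ) (φ : ℤ → ℂ) : ℤ → ℂ := fun k =>
  Complex.exp (Complex.I * (k : ℂ) ^ 3 * s) * φ k

/-- The space derivative `∂_ξ` in Fourier variables. -/
noncomputable def dxi (φ : ℤ → ℂ) : ℤ → ℂ := fun k => Complex.I * k * φ k

/-- The pointwise product of functions becomes convolution of Fourier coefficients. -/
noncomputable def conv (φ ψ : ℤ → ℂ) : ℤ → ℂ := fun k => ∑' k₁ : ℤ, φ k₁ * ψ (k - k₁)

/-- `Ẋ_σ(φ₁,φ₂) = ½ U(-σ) ∂_ξ [(U(σ)φ₁)(U(σ)φ₂)]` in Fourier variables. -/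
noncomputable def Xdot (σ : ℝ) (φ₁ φ₂ : ℤ → ℂ) : ℤ → ℂ := fun k =>
  (1 / 2 : ℂ) * Ugrp (-σ) (dxi (conv (Ugrp σ φ₁) (Ugrp σ φ₂))) k

/-- `X_{t,s} = ∫_s^t Ẋ_σ dσ`. -/
noncomputable def Xop (s t : ℝ) (φ ψ : ℤ → ℂ) : ℤ → ℂ := fun k =>
  ∫ σ in s..t, Xdot σ φ ψ k

/-- `X²_{t,s}(φ₁,φ₂,φ₃) = 2∫_s^t ∫_s^σ Ẋ_σ(φ₁, Ẋ_{σ₁}(φ₂,φ₃)) dσ₁ dσ`. -/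
noncomputable def X2op (s t : ℝ) (φ₁ φ₂ φ₃ : ℤ → ℂ) : ℤ → ℂ := fun k =>
  2 * ∫ σ in s..t, ∫ σ₁ in s..σ, Xdot σ φ₁ (Xdot σ₁ φ₂ φ₃) k

/-- The real `L²(𝕋)` inner product in Fourier variables. -/
noncomputable def innerL2 (φ ψ : ℤ → ℂ) : ℂ := (2 * π) * ∑' k : ℤ, φ (-k) * ψ k

open Function Set
open scoped Pointwise

lemma support_Ugrp (s : ℝ) (φ : ℤ → ℂ) : support (Ugrp s φ) = support φ := by
  ext k; simp [Ugrp, Complex.exp_ne_zero]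

lemma conv_eq_sum {f : ℤ → ℂ} {S : Finset ℤ} (hf : support f ⊆ S) (g : ℤ → ℂ) (k : ℤ) :
    conv f g k = ∑ a ∈ S, f a * g (k - a) :=
  tsum_eq_sum fun a ha => by rw [notMem_support.mp fun h => ha (hf h), zero_mul]

lemma support_conv_subset (f g : ℤ → ℂ) : support (conv f g) ⊆ support f + support g := by
  intro k hk
  by_contra hk'
  have hterm : ∀ a, f a * g (k - a) = 0 := fun a => by
    by_contra h
    exact hk' ⟨a, left_ne_zero_of_mul h, k - a, right_ne_zero_of_mul h, by ring⟩
  exact hk (by simp [conv, hterm])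

lemma support_Xdot_subset (σ : ℝ) (f g : ℤ → ℂ) :
    support (Xdot σ f g) ⊆ support f + support g := by
  intro k hk
  have : conv (Ugrp σ f) (Ugrp σ g) k ≠ 0 := fun h => hk (by simp [Xdot, Ugrp, dxi, h])
  simpa only [support_Ugrp] using support_conv_subset _ _ this

lemma support_Xop_subset (s t : ℝ) (f g : ℤ → ℂ) :
    support (Xop s t f g) ⊆ support f + support g := by
  intro k hk
  by_contra hk'
  have : ∀ σ, Xdot σ f g k = 0 := fun σ =>
    notMem_support.mp fun h => hk' (support_Xdot_subset σ f g h)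
  exact hk (by simp [Xop, this])

lemma Xop_self (s : ℝ) (f g : ℤ → ℂ) : Xop s s f g = 0 := by
  ext k; simp [Xop]

section innerL2

variable {T : Finset ℤ}

lemma innerL2_eq_sum {g : ℤ → ℂ} (hg : support g ⊆ T) (f : ℤ → ℂ) :
    innerL2 f g = 2 * π * ∑ k ∈ T, f (-k) * g k := by
  rw [innerL2, tsum_eq_sum fun k hk => by rw [notMem_support.mp fun h => hk (hg h), mul_zero]]

lemma innerL2_comm (f g : ℤ → ℂ) : innerL2 f g = innerL2 g f := by
  rw [innerL2, innerL2, ← (Equiv.neg ℤ).tsum_eq]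
  simp [mul_comm]

lemma innerL2_zero_right (f : ℤ → ℂ) : innerL2 f 0 = 0 := by
  simp [innerL2]

lemma innerL2_const_mul_right (f g : ℤ → ℂ) (c : ℂ) :
    innerL2 f (fun k => c * g k) = c * innerL2 f g := by
  simp only [innerL2, mul_left_comm _ c, tsum_mul_left]

lemma innerL2_integral {a b : ℝ} (f : ℤ → ℂ) {g : ℝ → ℤ → ℂ} (hg : ∀ τ, support (g τ) ⊆ T)
    (hint : ∀ k, IntervalIntegrable (fun τ => g τ k) volume a b) :
    innerL2 f (fun k => ∫ τ in a..b, g τ k) = ∫ τ in a..b, innerL2 f (g τ) := by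
  have hsupp : support (fun k => ∫ τ in a..b, g τ k) ⊆ T := fun k hk => by
    by_contra hkT
    exact hk (by simp [fun τ => notMem_support.mp fun h => hkT (hg τ h)])
  simp only [innerL2_eq_sum hsupp, innerL2_eq_sum (hg _), intervalIntegral.integral_const_mul,
    intervalIntegral.integral_finsetSum fun k _ => (hint k).const_mul _]

lemma continuous_innerL2 {u v : ℝ → ℤ → ℂ} (hv : ∀ τ, support (v τ) ⊆ T)
    (hu : ∀ k, Continuous fun τ => u τ k) (hv' : ∀ k, Continuous fun τ => v τ k) :
    Continuous fun τ => innerL2 (u τ) (v τ) := by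
  simp only [innerL2_eq_sum (hv _)]
  fun_prop

lemma hasDerivAt_innerL2 {u v : ℝ → ℤ → ℂ} {u' v' : ℤ → ℂ} {τ : ℝ}
    (hv : ∀ τ, support (v τ) ⊆ T) (hv'T : support v' ⊆ T)
    (hu : ∀ k, HasDerivAt (fun τ => u τ k) (u' k) τ)
    (hv' : ∀ k, HasDerivAt (fun τ => v τ k) (v' k) τ) :
    HasDerivAt (fun τ => innerL2 (u τ) (v τ)) (innerL2 u' (v τ) + innerL2 (u τ) v') τ := by
  simp only [innerL2_eq_sum (hv _), innerL2_eq_sum hv'T, ← mul_add, ← Finset.sum_add_distrib]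
  exact (HasDerivAt.fun_sum fun k _ => (hu (-k)).mul (hv' k)).const_mul _

end innerL2

section Xdot

variable {f : ℤ → ℂ} {S : Finset ℤ}

lemma Xdot_eq_sum (hf : support f ⊆ S) (σ : ℝ) (g : ℤ → ℂ) (k : ℤ) :
    Xdot σ f g k = ∑ a ∈ S, Complex.I * k / 2 *
      Complex.exp (Complex.I * ((a : ℂ) ^ 3 + ((k - a : ℤ) : ℂ) ^ 3 - (k : ℂ) ^ 3) * σ) *
        f a * g (k - a) := by
  rw [Xdot, Ugrp, dxi, conv_eq_sum ((support_Ugrp σ f).trans_subset hf), Finset.mul_sum,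
    Finset.mul_sum, Finset.mul_sum]
  refine Finset.sum_congr rfl fun a _ => ?_
  have hphase : Complex.exp (Complex.I * ((a : ℂ) ^ 3 + ((k - a : ℤ) : ℂ) ^ 3 - (k : ℂ) ^ 3) * σ) =
      Complex.exp (Complex.I * (k : ℂ) ^ 3 * ((-σ : ℝ) : ℂ)) *
        (Complex.exp (Complex.I * (a : ℂ) ^ 3 * σ) *
          Complex.exp (Complex.I * ((k - a : ℤ) : ℂ) ^ 3 * σ)) := by
    rw [← Complex.exp_add, ← Complex.exp_add]
    push_cast
    ring_nf
  rw [hphase, Ugrp, Ugrp]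
  ring

lemma continuous_Xdot (hf : (support f).Finite) {g : ℝ → ℤ → ℂ}
    (hg : ∀ j, Continuous fun σ => g σ j) (k : ℤ) : Continuous fun σ => Xdot σ f (g σ) k := by
  simp only [Xdot_eq_sum hf.coe_toFinset.symm.subset]
  refine continuous_finsetSum _ fun a _ => Continuous.mul ?_ (hg (k - a))
  fun_prop

lemma Xdot_integral_right (hf : (support f).Finite) {a b : ℝ} {g : ℝ → ℤ → ℂ}
    (hg : ∀ j, IntervalIntegrable (fun τ => g τ j) volume a b) (σ : ℝ) (k : ℤ) :
    Xdot σ f (fun j => ∫ τ in a..b, g τ j) k = ∫ τ in a..b, Xdot σ f (g τ) k := by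
  simp only [Xdot_eq_sum hf.coe_toFinset.symm.subset, ← intervalIntegral.integral_const_mul]
  exact (intervalIntegral.integral_finsetSum fun i _ => (hg (k - i)).const_mul _).symm

lemma hasDerivAt_Xop (hf : (support f).Finite) (g : ℤ → ℂ) (s t : ℝ) (k : ℤ) :
    HasDerivAt (fun t => Xop s t f g k) (Xdot t f g k) t :=
  ((continuous_Xdot hf (g := fun _ => g) (fun _ => continuous_const) k)
    |>.integral_hasStrictDerivAt s t).hasDerivAt

lemma continuous_Xop (hf : (support f).Finite) (g : ℤ → ℂ) (s : ℝ) (k : ℤ) :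
    Continuous fun t => Xop s t f g k :=
  continuous_iff_continuousAt.mpr fun t => (hasDerivAt_Xop hf g s t k).continuousAt

lemma X2op_eq_integral (hf : (support f).Finite) {g : ℤ → ℂ} (hg : (support g).Finite)
    (h : ℤ → ℂ) (s t : ℝ) (k : ℤ) :
    X2op s t f g h k = 2 * ∫ σ in s..t, Xdot σ f (Xop s σ g h) k := by
  rw [X2op]
  congr 1
  refine intervalIntegral.integral_congr fun σ _ => (Xdot_integral_right hf (fun j => ?_) σ k).symm
  exact (continuous_Xdot hg (g := fun _ => h) (fun _ => continuous_const) j).intervalIntegrable _ _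

end Xdot

section Antisymmetry

lemma innerL2_Xdot (σ : ℝ) (f g h : ℤ → ℂ) :
    innerL2 f (Xdot σ g h) = 1 / 2 * innerL2 (Ugrp σ f) (dxi (conv (Ugrp σ g) (Ugrp σ h))) := by
  simp only [innerL2, Xdot, ← tsum_mul_left]
  congr 1
  ext k
  simp only [Ugrp]
  push_cast
  ring_nf

/-- The density of `∫ F ∂(G H)` on the frequency plane: `(a, b)` are the frequencies of `G` and
`H`, and `F` carries the frequency `-(a + b)`. -/
noncomputable def dxiTriple (F G H : ℤ → ℂ) (p : ℤ × ℤ) : ℂ :=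
  Complex.I * (p.1 + p.2) * F (-(p.1 + p.2)) * G p.1 * H p.2

lemma summable_dxiTriple (F : ℤ → ℂ) {G H : ℤ → ℂ} (hG : (support G).Finite)
    (hH : (support H).Finite) : Summable (dxiTriple F G H) := by
  refine summable_of_hasFiniteSupport ((hG.prod hH).subset fun p hp => ?_)
  simp only [dxiTriple, mem_support] at hp
  exact ⟨right_ne_zero_of_mul (left_ne_zero_of_mul hp), right_ne_zero_of_mul hp⟩

lemma innerL2_dxi_conv (F : ℤ → ℂ) {G H : ℤ → ℂ} (hG : (support G).Finite)
    (hH : (support H).Finite) :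
    innerL2 F (dxi (conv G H)) = 2 * π * ∑' p, dxiTriple F G H p := by
  -- `e (k, a) = (a, k - a)`
  let e : ℤ × ℤ ≃ ℤ × ℤ :=
    (Equiv.prodComm ℤ ℤ).trans (Equiv.prodShear (Equiv.refl ℤ) fun a => Equiv.subRight a)
  have hsum : Summable (dxiTriple F G H ∘ e) := e.summable_iff.mpr (summable_dxiTriple F hG hH)
  have hprod := hsum.tsum_prod
  simp only [Function.comp_apply] at hprod
  rw [innerL2, ← e.tsum_eq, hprod]
  congr 1
  refine tsum_congr fun k => ?_
  simp only [dxi, conv, ← tsum_mul_left]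
  refine tsum_congr fun a => ?_
  simp only [dxiTriple, e, Equiv.trans_apply, Equiv.prodComm_apply, Prod.swap_prod_mk,
    Equiv.prodShear_apply, Equiv.refl_apply, Equiv.subRight_apply, Int.cast_sub, add_sub_cancel]
  ring

/-- Antisymmetry of `⟨F, ∂(F H)⟩`: summing the density over the orbit of the involutions
`(a, b) ↦ (-a - b, b)` and `(a, b) ↦ (a, -a - b)` cancels it pointwise. -/
lemma innerL2_dxi_conv_self_left {F H : ℤ → ℂ} (hF : (support F).Finite)
    (hH : (support H).Finite) :
    innerL2 F (dxi (conv F H)) = -(1 / 2) * innerL2 H (dxi (conv F F)) := by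
  let eA : Equiv.Perm (ℤ × ℤ) :=
    Function.Involutive.toPerm (fun p => (-p.1 - p.2, p.2)) fun p => by ext <;> simp
  let eB : Equiv.Perm (ℤ × ℤ) :=
    Function.Involutive.toPerm (fun p => (p.1, -p.1 - p.2)) fun p => by ext <;> simp
  have hFFH := summable_dxiTriple F hF hH
  have hHFF := summable_dxiTriple H hF hF
  have hcancel : ∀ p, dxiTriple F F H p + dxiTriple F F H (eA p) + dxiTriple H F F (eB p) = 0 := by
    rintro ⟨a, b⟩
    show dxiTriple F F H (a, b) + dxiTriple F F H (-a - b, b) + dxiTriple H F F (a, -a - b) = 0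
    simp only [dxiTriple]
    push_cast
    ring_nf
  have hsum : 2 * ∑' p, dxiTriple F F H p + ∑' p, dxiTriple H F F p = 0 := calc
    _ = ∑' p, dxiTriple F F H p + ∑' p, dxiTriple F F H (eA p) + ∑' p, dxiTriple H F F (eB p) := by
      rw [eA.tsum_eq, eB.tsum_eq]; ring
    _ = ∑' p, (dxiTriple F F H p + dxiTriple F F H (eA p) + dxiTriple H F F (eB p)) := by
      have hA : Summable fun p => dxiTriple F F H (eA p) := eA.summable_iff.mpr hFFH
      have hB : Summable fun p => dxiTriple H F F (eB p) := eB.summable_iff.mpr hHFF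
      rw [(hFFH.add hA).tsum_add hB, hFFH.tsum_add hA]
    _ = 0 := by simp only [hcancel, tsum_zero]
  rw [innerL2_dxi_conv F hF hH, innerL2_dxi_conv H hF hF]
  linear_combination π * hsum

lemma innerL2_Xdot_self_left (σ : ℝ) {f h : ℤ → ℂ} (hf : (support f).Finite)
    (hh : (support h).Finite) :
    innerL2 f (Xdot σ f h) = -(1 / 2) * innerL2 h (Xdot σ f f) := by
  rw [← support_Ugrp σ] at hf hh
  rw [innerL2_Xdot, innerL2_Xdot, innerL2_dxi_conv_self_left hf hh]
  ring

end Antisymmetry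

lemma innerL2_Xop_self {f g : ℤ → ℂ} (hf : (support f).Finite) (hg : (support g).Finite)
    (s t : ℝ) :
    innerL2 (Xop s t f g) (Xop s t f g) = 2 * ∫ σ in s..t, innerL2 (Xop s σ f g) (Xdot σ f g) := by
  have hXop : ∀ σ, support (Xop s σ f g) ⊆ (hf.add hg).toFinset := fun σ =>
    (hf.add hg).coe_toFinset.symm ▸ support_Xop_subset s σ f g
  have hXdot : ∀ σ, support (Xdot σ f g) ⊆ (hf.add hg).toFinset := fun σ =>
    (hf.add hg).coe_toFinset.symm ▸ support_Xdot_subset σ f g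
  have hderiv : ∀ τ, HasDerivAt (fun τ => innerL2 (Xop s τ f g) (Xop s τ f g))
      (2 * innerL2 (Xop s τ f g) (Xdot τ f g)) τ := fun τ => by
    have := hasDerivAt_innerL2 hXop (hXdot τ) (hasDerivAt_Xop hf g s τ) (hasDerivAt_Xop hf g s τ)
    rwa [innerL2_comm (Xdot τ f g), ← two_mul] at this
  have hcont : Continuous fun τ => 2 * innerL2 (Xop s τ f g) (Xdot τ f g) :=
    continuous_const.mul <| continuous_innerL2 hXdot (continuous_Xop hf g s)
      (continuous_Xdot hf (g := fun _ => g) fun _ => continuous_const)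
  rw [← intervalIntegral.integral_const_mul,
    intervalIntegral.integral_eq_sub_of_hasDerivAt (fun τ _ => hderiv τ)
      (hcont.intervalIntegrable _ _),
    Xop_self, innerL2_zero_right, sub_zero]

lemma innerL2_X2op_self {f : ℤ → ℂ} (hf : (support f).Finite) (s t : ℝ) :
    innerL2 f (X2op s t f f f) = -∫ σ in s..t, innerL2 (Xop s σ f f) (Xdot σ f f) := by
  have hsupp : ∀ σ, support (Xdot σ f (Xop s σ f f)) ⊆ (hf.add (hf.add hf)).toFinset := fun σ =>
    (hf.add (hf.add hf)).coe_toFinset.symm ▸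
      (support_Xdot_subset _ _ _).trans (add_subset_add_left (support_Xop_subset s σ f f))
  have hcont : ∀ k, Continuous fun σ => Xdot σ f (Xop s σ f f) k :=
    continuous_Xdot hf (continuous_Xop hf f s)
  calc innerL2 f (X2op s t f f f)
      = 2 * ∫ σ in s..t, innerL2 f (Xdot σ f (Xop s σ f f)) := by
        rw [← innerL2_integral f hsupp fun k => (hcont k).intervalIntegrable _ _,
          ← innerL2_const_mul_right]
        exact congrArg _ (funext (X2op_eq_integral hf hf f s t))
    _ = 2 * ∫ σ in s..t, -(1 / 2) * innerL2 (Xop s σ f f) (Xdot σ f f) := by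
        simp only [innerL2_Xdot_self_left _ hf ((hf.add hf).subset (support_Xop_subset s _ f f))]
    _ = -∫ σ in s..t, innerL2 (Xop s σ f f) (Xdot σ f f) := by
        rw [intervalIntegral.integral_const_mul]; ring

theorem inner_X2_cancellation_general (s t : ℝ) (φ : ℤ → ℂ)
    (hfin : (Function.support φ).Finite) :
    2 * innerL2 φ (X2op s t φ φ φ)
      + innerL2 (Xop s t φ φ) (Xop s t φ φ) = 0 := by
  rw [innerL2_X2op_self hfin, innerL2_Xop_self hfin hfin]
  ring

/-- The second `L²` conservation identity:
`2⟨φ, X²_{t,s}(φ,φ,φ)⟩ + ‖X_{t,s}(φ,φ)‖²_{L²} = 0` for smooth real mean-zero `φ`. -/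
theorem inner_X2_cancellation (s t : ℝ) (φ : ℤ → ℂ)
    (hfin : (Function.support φ).Finite) (h0 : φ 0 = 0)
    (hreal : ∀ k, φ (-k) = starRingEnd ℂ (φ k)) :
    2 * innerL2 φ (X2op s t φ φ φ)
      + innerL2 (Xop s t φ φ) (Xop s t φ φ) = 0 :=
  inner_X2_cancellation_general s t φ hfin
end

section
/- Let $k_2 = k - k_1$, $k_{22} = k_2 - k_{21}$ and $h = k k_1 k_2 + k_2 k_{21} k_{22}$. Then $h = k_2 (k_1 + k_{21})(k - k_{21})$. Consequently, if $k, k_1, k_2, k_{21}, k_{22}$ are all nonzero and $h = 0$, then either ($k = k_{21}$ and $k_1 = -k_{22}$) or ($k = k_{22}$ and $k_1 = -k_{21}$). -/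
/-- Resonance factorization for the second-order KdV operator: with
`k₂ = k - k₁`, `k₂₂ = k₂ - k₂₁` and `h = k k₁ k₂ + k₂ k₂₁ k₂₂`, one has
`h = k₂ (k₁ + k₂₁)(k - k₂₁)`; consequently if all frequencies are nonzero and
`h = 0` then either `k = k₂₁ ∧ k₁ = -k₂₂` or `k = k₂₂ ∧ k₁ = -k₂₁`. -/
theorem resonance_factorization (k k₁ k₂ k₂₁ k₂₂ : ℤ)
    (h₂ : k₂ = k - k₁) (h₂₂ : k₂₂ = k₂ - k₂₁) :
    k * k₁ * k₂ + k₂ * k₂₁ * k₂₂ = k₂ * (k₁ + k₂₁) * (k - k₂₁) ∧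
    (k ≠ 0 → k₁ ≠ 0 → k₂ ≠ 0 → k₂₁ ≠ 0 → k₂₂ ≠ 0 →
      k * k₁ * k₂ + k₂ * k₂₁ * k₂₂ = 0 →
      (k = k₂₁ ∧ k₁ = -k₂₂) ∨ (k = k₂₂ ∧ k₁ = -k₂₁)) := by
  subst h₂ h₂₂
  constructor
  · ring
  · intro hk hk1 hk2 hk21 hk22 h0
    have h0' : (k - k₁) * ((k₁ + k₂₁) * (k - k₂₁)) = 0 := by linarith [h0]; 
    rcases mul_eq_zero.mp h0' with h | h
    · exact absurd h hk2
    rcases mul_eq_zero.mp h with h | h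
    · right
      constructor <;> omega
    · left
      constructor <;> omega
end

section
/- Let $V$ be a Banach space, $\mu > 1$, and let $h : \{(s,u,t) : 0 \le s \le u \le t \le T\} \to V$ satisfy $h = \delta R$ for some continuous $R : [0,T]^2 \to V$ vanishing on the diagonal, together with the bound $\|h_{t,u,s}\| \le M |u - s|^{\rho} |t - u|^{\mu - \rho}$ for some $0 < \rho < \mu$. If $R' : [0,T]^2 \to V$ also satisfies $\delta R' = h$ and $\|R'_{t,s}\| \le M' |t-s|^{\mu}$, and $\|R_{t,s}\| \le M'' |t-s|^{\mu}$, then $R = R'$. -/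
/-!
Two solutions of the sewing problem with the same coboundary differ by a two-parameter function `D`
that is additive, `D t s = D t u + D u s`, so `D y x = f y - f x` for the path `f x = D x s`.
The `μ`-Hölder bound with `μ > 1` makes `f` differentiable with zero derivative, hence constant,
and `D t s = f t - f s = 0`.
-/

open Set Topology Asymptotics

section

variable {E : Type*} [NormedAddCommGroup E] [NormedSpace ℝ E]

theorem hasDerivWithinAt_zero_of_norm_sub_le_rpow {f : ℝ → E} {s : Set ℝ} {x C μ : ℝ}
    (hμ : 1 < μ) (hf : ∀ y ∈ s, ‖f y - f x‖ ≤ C * |y - x| ^ μ) :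
    HasDerivWithinAt f 0 s x := by
  rw [hasDerivWithinAt_iff_isLittleO]
  simp only [smul_zero, sub_zero]
  have hbigO : (fun y => f y - f x) =O[𝓝[s] x] fun y => |y - x| ^ μ :=
    IsBigO.of_bound C <| eventually_nhdsWithin_of_forall fun y hy => by
      simpa [abs_of_nonneg (Real.rpow_nonneg (abs_nonneg _) _)] using hf y hy
  have hsmall : (fun y => |y - x| ^ (μ - 1)) =o[𝓝 x] fun _ => (1 : ℝ) := by
    rw [isLittleO_one_iff]
    have h := ((continuous_abs.comp (continuous_sub_right x)).tendsto x).rpow_const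
      (p := μ - 1) (Or.inr (by linarith))
    simpa [Real.zero_rpow (by linarith : μ - 1 ≠ 0)] using h
  have hpow : (fun y => |y - x| ^ μ) =o[𝓝 x] fun y => y - x := by
    have h := hsmall.mul_isBigO (isBigO_abs_left.2 (isBigO_refl (fun y => y - x) (𝓝 x)))
    refine (h.congr_left fun y => ?_).congr_right fun y => one_mul _
    rw [← Real.rpow_add_one' (abs_nonneg _) (by linarith), sub_add_cancel]
  exact hbigO.trans_isLittleO (hpow.mono nhdsWithin_le_nhds)

theorem eq_of_norm_sub_le_rpow_of_one_lt {f : ℝ → E} {a b C μ : ℝ} (hμ : 1 < μ)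
    (hf : ∀ x ∈ Icc a b, ∀ y ∈ Icc a b, ‖f y - f x‖ ≤ C * |y - x| ^ μ) :
    ∀ x ∈ Icc a b, f x = f a := by
  have hderiv : ∀ x ∈ Icc a b, HasDerivWithinAt f 0 (Icc a b) x := fun x hx =>
    hasDerivWithinAt_zero_of_norm_sub_le_rpow hμ (hf x hx)
  refine constant_of_has_deriv_right_zero (fun x hx => (hderiv x hx).continuousWithinAt) ?_
  intro x hx
  exact (hderiv x (Ico_subset_Icc_self hx)).mono_of_mem_nhdsWithin <|
    Filter.mem_of_superset (Icc_mem_nhdsGE hx.2) (Icc_subset_Icc_left hx.1)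

theorem eq_zero_of_additive_of_norm_le_rpow {D : ℝ → ℝ → E} {s t C μ : ℝ} (hμ : 1 < μ)
    (hst : s ≤ t)
    (hadd : ∀ a b c, a ∈ Icc s t → b ∈ Icc s t → c ∈ Icc s t → a ≤ b → b ≤ c →
      D c a = D c b + D b a)
    (hD : ∀ a ∈ Icc s t, ∀ b ∈ Icc s t, ‖D b a‖ ≤ C * |b - a| ^ μ) :
    D t s = 0 := by
  have hs : s ∈ Icc s t := left_mem_Icc.2 hst
  have hdiff : ∀ x ∈ Icc s t, ∀ y ∈ Icc s t, x ≤ y → D y s - D x s = D y x := fun x hx y hy hxy =>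
    sub_eq_of_eq_add (hadd s x y hs hx hy hx.1 hxy)
  have hpath : ∀ x ∈ Icc s t, ∀ y ∈ Icc s t, ‖D y s - D x s‖ ≤ C * |y - x| ^ μ := by
    intro x hx y hy
    rcases le_total x y with hxy | hyx
    · rw [hdiff x hx y hy hxy]
      exact hD x hx y hy
    · rw [← norm_neg, neg_sub, hdiff y hy x hx hyx, abs_sub_comm]
      exact hD y hy x hx
  have hss : D s s = 0 := by
    simpa using hadd s s s hs hs hs le_rfl le_rfl
  rw [eq_of_norm_sub_le_rpow_of_one_lt hμ hpath t (right_mem_Icc.2 hst), hss]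

end

theorem sewing_uniqueness_general {V : Type*} [NormedAddCommGroup V] [NormedSpace ℝ V]
    (T μ M' M'' : ℝ) (hμ : 1 < μ)
    (R R' : ℝ → ℝ → V)
    (hcob : ∀ s u t : ℝ, s ∈ Set.Icc 0 T → u ∈ Set.Icc 0 T → t ∈ Set.Icc 0 T →
      s ≤ u → u ≤ t →
      R' t s - R' t u - R' u s = R t s - R t u - R u s)
    (hR' : ∀ s t : ℝ, s ∈ Set.Icc 0 T → t ∈ Set.Icc 0 T →
      ‖R' t s‖ ≤ M' * |t - s| ^ μ)
    (hR : ∀ s t : ℝ, s ∈ Set.Icc 0 T → t ∈ Set.Icc 0 T →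
      ‖R t s‖ ≤ M'' * |t - s| ^ μ) :
    ∀ s t : ℝ, s ∈ Set.Icc 0 T → t ∈ Set.Icc 0 T → s ≤ t → R t s = R' t s := by
  intro s t hs ht hst
  have hsub : Icc s t ⊆ Icc 0 T := Icc_subset_Icc hs.1 ht.2
  refine sub_eq_zero.1 <| eq_zero_of_additive_of_norm_le_rpow (D := R - R') (C := M'' + M')
    hμ hst ?_ ?_
  · intro a b c ha hb hc hab hbc
    have h := hcob a b c (hsub ha) (hsub hb) (hsub hc) hab hbc
    simp only [Pi.sub_apply]
    linear_combination (norm := module) -h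
  · intro a ha b hb
    calc ‖R b a - R' b a‖ ≤ ‖R b a‖ + ‖R' b a‖ := norm_sub_le _ _
      _ ≤ M'' * |b - a| ^ μ + M' * |b - a| ^ μ :=
        add_le_add (hR a b (hsub ha) (hsub hb)) (hR' a b (hsub ha) (hsub hb))
      _ = (M'' + M') * |b - a| ^ μ := by ring

/-- Uniqueness part of the sewing lemma: if `R` and `R'` are two-parameter
functions on `[0,T]` with the same coboundary `h = δR = δR'` (on ordered
triples), `h` satisfies a bound of Hölder type of total exponent `μ > 1`, and
both `R` and `R'` are Hölder of exponent `μ`, then `R = R'`. -/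
theorem sewing_uniqueness {V : Type*} [NormedAddCommGroup V] [NormedSpace ℝ V]
    (T μ ρ M M' M'' : ℝ) (hT : 0 ≤ T) (hμ : 1 < μ) (hρ : 0 < ρ) (hρμ : ρ < μ)
    (R R' : ℝ → ℝ → V)
    (hcont : Continuous fun p : ℝ × ℝ => R p.1 p.2)
    (hdiag : ∀ t, R t t = 0)
    (hh : ∀ s u t : ℝ, s ∈ Set.Icc 0 T → u ∈ Set.Icc 0 T → t ∈ Set.Icc 0 T →
      s ≤ u → u ≤ t →
      ‖R t s - R t u - R u s‖ ≤ M * (u - s) ^ ρ * (t - u) ^ (μ - ρ))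
    (hcob : ∀ s u t : ℝ, s ∈ Set.Icc 0 T → u ∈ Set.Icc 0 T → t ∈ Set.Icc 0 T →
      s ≤ u → u ≤ t →
      R' t s - R' t u - R' u s = R t s - R t u - R u s)
    (hR' : ∀ s t : ℝ, s ∈ Set.Icc 0 T → t ∈ Set.Icc 0 T →
      ‖R' t s‖ ≤ M' * |t - s| ^ μ)
    (hR : ∀ s t : ℝ, s ∈ Set.Icc 0 T → t ∈ Set.Icc 0 T →
      ‖R t s‖ ≤ M'' * |t - s| ^ μ) :
    ∀ s t : ℝ, s ∈ Set.Icc 0 T → t ∈ Set.Icc 0 T → s ≤ t → R t s = R' t s :=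
  sewing_uniqueness_general T μ M' M'' hμ R R' hcob hR' hR
end
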